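/- arXiv:2507.08913 — 4 statements merged into one kernel-verified Lean document; each statement's English description precedes it below -/
import Mathlib

section
/- Let F be differentiable on R^d and ℓ-smooth in the sense that for all w and all w₁, w₂ in the ball B(w, C/ℓ(‖∇F(w)‖+C)) one has ‖∇F(w₁) − ∇F(w₂)‖ ≤ ℓ(‖∇F(w)‖+C)·‖w₁−w₂‖, where ℓ is non-decreasing and positive. Then for any G > 0 and any w with ‖∇F(w)‖ ≤ G, and any w₁, w₂ ∈ B(w, G/ℓ(2G)): (a) ‖∇F(w₁) − ∇F(w₂)‖ ≤ ℓ(2G)‖w₁−w₂‖, and (b) F(w₁) ≤ F(w₂) + ⟨∇F(w₂), w₁−w₂⟩ + (ℓ(2G)/2)‖w₁−w₂‖². -/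
/-! Monotonicity of `ℓ` lets one trade the radius and constant `ℓ(‖∇F(w)‖ + G)` supplied by
ℓ-smoothness (with `C = G`) for the uniform ones `ℓ(2G)`, which gives (a) on the smaller ball
`B(w, G/ℓ(2G))`. Since balls are convex, (b) is then the classical descent lemma for a function whose
gradient is `L`-Lipschitz on a convex set: along the segment `t ↦ w₂ + t (w₁ - w₂)` the derivative
exceeds its value at `t = 0` by at most `L t ‖w₁ - w₂‖²`, and integrating over `[0, 1]` gives the
quadratic term. -/

open Metric Set

/-- ℓ-smoothness (Definition 2.2 of the paper) of a map `g`, which plays the role of `∇F`. -/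
def LocallyLipschitzWithGrowth {E E' : Type*} [NormedAddCommGroup E] [NormedAddCommGroup E']
    (ℓ : ℝ → ℝ) (g : E → E') : Prop :=
  ∀ w : E, ∀ C : ℝ, 0 < C →
    ∀ x ∈ ball w (C / ℓ (‖g w‖ + C)), ∀ y ∈ ball w (C / ℓ (‖g w‖ + C)),
      ‖g x - g y‖ ≤ ℓ (‖g w‖ + C) * ‖x - y‖

theorem LocallyLipschitzWithGrowth.norm_sub_le {E E' : Type*} [NormedAddCommGroup E]
    [NormedAddCommGroup E'] {ℓ : ℝ → ℝ} {g : E → E'} (hg : LocallyLipschitzWithGrowth ℓ g)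
    (hℓ_mono : Monotone ℓ) (hℓ_pos : ∀ u, 0 ≤ u → 0 < ℓ u) {G : ℝ} (hG : 0 < G) {w : E}
    (hw : ‖g w‖ ≤ G) {x y : E} (hx : x ∈ ball w (G / ℓ (2 * G)))
    (hy : y ∈ ball w (G / ℓ (2 * G))) :
    ‖g x - g y‖ ≤ ℓ (2 * G) * ‖x - y‖ := by
  have hℓ_le : ℓ (‖g w‖ + G) ≤ ℓ (2 * G) := hℓ_mono (by linarith)
  have hball : ball w (G / ℓ (2 * G)) ⊆ ball w (G / ℓ (‖g w‖ + G)) :=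
    ball_subset_ball (div_le_div_of_nonneg_left hG.le (hℓ_pos _ (by positivity)) hℓ_le)
  calc ‖g x - g y‖ ≤ ℓ (‖g w‖ + G) * ‖x - y‖ := hg w G hG x (hball hx) y (hball hy)
    _ ≤ ℓ (2 * G) * ‖x - y‖ := by gcongr

theorem image_one_le_of_hasDerivAt_le_affine {φ φ' : ℝ → ℝ} {a b : ℝ}
    (hφ : ∀ t ∈ Icc (0 : ℝ) 1, HasDerivAt φ (φ' t) t)
    (hφ' : ∀ t ∈ Icc (0 : ℝ) 1, φ' t ≤ a + b * t) :
    φ 1 ≤ φ 0 + a + b / 2 := by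
  have hB : ∀ t, HasDerivAt (fun s : ℝ => φ 0 + (a * s + b / 2 * s ^ 2)) (a + b * t) t := by
    intro t
    refine ((((hasDerivAt_id t).const_mul a).add ((hasDerivAt_pow 2 t).const_mul (b / 2))).const_add
      (φ 0)).congr_deriv ?_
    norm_num
    ring
  have key := image_le_of_deriv_right_le_deriv_boundary (a := 0) (b := 1)
    (fun t ht => (hφ t ht).continuousAt.continuousWithinAt)
    (fun t ht => (hφ t (Ico_subset_Icc_self ht)).hasDerivWithinAt) (by simp)
    (fun t _ => (hB t).continuousAt.continuousWithinAt)
    (fun t _ => (hB t).hasDerivWithinAt) (fun t ht => hφ' t (Ico_subset_Icc_self ht))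
    (right_mem_Icc.2 zero_le_one)
  linarith

theorem Convex.le_add_inner_gradient_add_of_norm_gradient_sub_le {E : Type*}
    [NormedAddCommGroup E] [InnerProductSpace ℝ E] [CompleteSpace E] {f : E → ℝ} {s : Set E}
    {L : ℝ} (hs : Convex ℝ s) (hf : ∀ x ∈ s, DifferentiableAt ℝ f x)
    (hL : ∀ x ∈ s, ∀ y ∈ s, ‖gradient f x - gradient f y‖ ≤ L * ‖x - y‖) {x y : E}
    (hx : x ∈ s) (hy : y ∈ s) :
    f y ≤ f x + inner ℝ (gradient f x) (y - x) + L / 2 * ‖y - x‖ ^ 2 := by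
  set v := y - x
  have hseg : ∀ t ∈ Icc (0 : ℝ) 1, x + t • v ∈ s := fun t ht => hs.add_smul_sub_mem hx hy ht
  have hderiv : ∀ t ∈ Icc (0 : ℝ) 1,
      HasDerivAt (fun t : ℝ => f (x + t • v)) (inner ℝ (gradient f (x + t • v)) v) t := by
    intro t ht
    have hline : HasDerivAt (fun t : ℝ => x + t • v) v t := by
      simpa using ((hasDerivAt_id t).smul_const v).const_add x
    exact (hf _ (hseg t ht)).hasGradientAt.hasFDerivAt.comp_hasDerivAt t hline
  have hslope : ∀ t ∈ Icc (0 : ℝ) 1,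
      inner ℝ (gradient f (x + t • v)) v ≤ inner ℝ (gradient f x) v + L * ‖v‖ ^ 2 * t := by
    intro t ht
    have hgrad : ‖gradient f (x + t • v) - gradient f x‖ ≤ L * (t * ‖v‖) := by
      simpa [norm_smul, abs_of_nonneg ht.1] using hL _ (hseg t ht) x hx
    calc inner ℝ (gradient f (x + t • v)) v
        = inner ℝ (gradient f x) v + inner ℝ (gradient f (x + t • v) - gradient f x) v := by
          rw [inner_sub_left]; ring
      _ ≤ inner ℝ (gradient f x) v + ‖gradient f (x + t • v) - gradient f x‖ * ‖v‖ := by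
          gcongr; exact real_inner_le_norm _ _
      _ ≤ inner ℝ (gradient f x) v + L * (t * ‖v‖) * ‖v‖ := by gcongr
      _ = inner ℝ (gradient f x) v + L * ‖v‖ ^ 2 * t := by ring
  have key := image_one_le_of_hasDerivAt_le_affine hderiv hslope
  simp only [one_smul, zero_smul, add_zero, add_sub_cancel, v] at key
  linarith

theorem stmt_6 (d : ℕ) (F : EuclideanSpace ℝ (Fin d) → ℝ) (ℓ : ℝ → ℝ)
    (hℓ_mono : Monotone ℓ) (hℓ_pos : ∀ u, 0 ≤ u → 0 < ℓ u)
    (hdiff : Differentiable ℝ F)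
    (hsmooth : ∀ w : EuclideanSpace ℝ (Fin d), ∀ C : ℝ, 0 < C →
      ∀ w₁ ∈ Metric.ball w (C / ℓ (‖gradient F w‖ + C)),
      ∀ w₂ ∈ Metric.ball w (C / ℓ (‖gradient F w‖ + C)),
        ‖gradient F w₁ - gradient F w₂‖ ≤ ℓ (‖gradient F w‖ + C) * ‖w₁ - w₂‖) :
    ∀ G : ℝ, 0 < G → ∀ w : EuclideanSpace ℝ (Fin d), ‖gradient F w‖ ≤ G →
      ∀ w₁ ∈ Metric.ball w (G / ℓ (2 * G)), ∀ w₂ ∈ Metric.ball w (G / ℓ (2 * G)),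
        ‖gradient F w₁ - gradient F w₂‖ ≤ ℓ (2 * G) * ‖w₁ - w₂‖ ∧
        F w₁ ≤ F w₂ + inner ℝ (gradient F w₂) (w₁ - w₂) + (ℓ (2 * G) / 2) * ‖w₁ - w₂‖ ^ 2 := by
  intro G hG w hw w₁ hw₁ w₂ hw₂
  have hlip : ∀ x ∈ ball w (G / ℓ (2 * G)), ∀ y ∈ ball w (G / ℓ (2 * G)),
      ‖gradient F x - gradient F y‖ ≤ ℓ (2 * G) * ‖x - y‖ :=
    fun x hx y hy => LocallyLipschitzWithGrowth.norm_sub_le hsmooth hℓ_mono hℓ_pos hG hw hx hy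
  exact ⟨hlip w₁ hw₁ w₂ hw₂,
    (convex_ball w _).le_add_inner_gradient_add_of_norm_gradient_sub_le
      (fun x _ => hdiff x) hlip hw₂ hw₁⟩
end

section
/- Let F be differentiable and ℓ-smooth (‖∇²F(x)‖ ≤ ℓ(‖∇F(x)‖) a.e. with ℓ non-decreasing, continuous, positive). Then for any w in dom(F), ‖∇F(w)‖² ≤ 2·ℓ(2‖∇F(w)‖)·(F(w) − F*), where F* = inf F > −∞. -/
/-!
A gradient step of length `1 / L`, with `L = ℓ (2 ‖∇F w‖)`, moves by `‖∇F w‖ / L`, so it stays in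
the closed ball on which `L` is a Lipschitz constant for `∇F` (take `C = ‖∇F w‖` in the smoothness
hypothesis). The descent lemma on that ball gives `F* ≤ F (w - ∇F w / L) ≤ F w - ‖∇F w‖² / (2 L)`.
-/

open Set
open scoped RealInnerProductSpace

section Descent

variable {E : Type*} [NormedAddCommGroup E] [InnerProductSpace ℝ E] [CompleteSpace E]
  {F : E → ℝ} {x v : E} {L : ℝ}

theorem DifferentiableAt.hasDerivAt_comp_add_smul {t : ℝ} (hF : DifferentiableAt ℝ F (x + t • v)) :
    HasDerivAt (fun s : ℝ => F (x + s • v)) ⟪gradient F (x + t • v), v⟫ t := by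
  have hline : HasDerivAt (fun s : ℝ => x + s • v) v t := by
    simpa using ((hasDerivAt_id t).smul_const v).const_add x
  have := hF.hasGradientAt.hasFDerivAt.comp_hasDerivAt t hline
  rwa [InnerProductSpace.toDual_apply_apply] at this

/-- The hypothesis is only needed on the open segment, so that the endpoint `x + v` may lie on the
boundary of a ball where the gradient is Lipschitz. -/
theorem le_add_inner_gradient_add_of_norm_gradient_sub_le (hF : Differentiable ℝ F)
    (hlip : ∀ t ∈ Ioo (0 : ℝ) 1, ‖gradient F (x + t • v) - gradient F x‖ ≤ L * ‖t • v‖) :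
    F (x + v) ≤ F x + ⟪gradient F x, v⟫ + L / 2 * ‖v‖ ^ 2 := by
  set φ : ℝ → ℝ := fun t => F (x + t • v) - t * ⟪gradient F x, v⟫ - L / 2 * t ^ 2 * ‖v‖ ^ 2
  have hφ' : ∀ t, HasDerivAt φ (⟪gradient F (x + t • v) - gradient F x, v⟫ - L * t * ‖v‖ ^ 2) t := by
    intro t
    refine (((hF _).hasDerivAt_comp_add_smul.sub ((hasDerivAt_id t).mul_const _)).sub
      (((hasDerivAt_pow 2 t).const_mul (L / 2)).mul_const (‖v‖ ^ 2))).congr_deriv ?_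
    rw [inner_sub_left]
    ring
  have hanti : AntitoneOn φ (Icc 0 1) := by
    refine antitoneOn_of_hasDerivWithinAt_nonpos (convex_Icc 0 1)
      (HasDerivAt.continuousOn fun t _ => hφ' t) (fun t _ => (hφ' t).hasDerivWithinAt) ?_
    rw [interior_Icc]
    intro t ht
    rw [sub_nonpos]
    calc ⟪gradient F (x + t • v) - gradient F x, v⟫
        ≤ ‖gradient F (x + t • v) - gradient F x‖ * ‖v‖ := real_inner_le_norm _ _
      _ ≤ L * ‖t • v‖ * ‖v‖ := by gcongr; exact hlip t ht
      _ = L * t * ‖v‖ ^ 2 := by rw [norm_smul, Real.norm_of_nonneg ht.1.le]; ring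
  have := hanti (left_mem_Icc.2 zero_le_one) (right_mem_Icc.2 zero_le_one) zero_le_one
  simp only [φ, zero_smul, one_smul, add_zero] at this
  linarith

theorem le_add_inner_gradient_add_of_lipschitz_on_ball (hF : Differentiable ℝ F) {r : ℝ}
    (hr : 0 < r)
    (hlip : ∀ y ∈ Metric.ball x r, ‖gradient F y - gradient F x‖ ≤ L * ‖y - x‖)
    (hv : ‖v‖ ≤ r) :
    F (x + v) ≤ F x + ⟪gradient F x, v⟫ + L / 2 * ‖v‖ ^ 2 := by
  refine le_add_inner_gradient_add_of_norm_gradient_sub_le hF fun t ht => ?_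
  have hmem : x + t • v ∈ Metric.ball x r := by
    rw [Metric.mem_ball, dist_eq_norm, add_sub_cancel_left, norm_smul, Real.norm_of_nonneg ht.1.le]
    rcases (norm_nonneg v).eq_or_lt with h0 | hpos
    · rwa [← h0, mul_zero]
    · nlinarith [ht.2]
  simpa using hlip _ hmem

end Descent

theorem stmt_9_general (d : ℕ) (F : EuclideanSpace ℝ (Fin d) → ℝ) (ℓ : ℝ → ℝ)
    (hℓ_pos : ∀ u, 0 ≤ u → 0 < ℓ u)
    (hdiff : Differentiable ℝ F)
    (hsmooth : ∀ w : EuclideanSpace ℝ (Fin d), ∀ C : ℝ, 0 < C →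
      ∀ w₁ ∈ Metric.ball w (C / ℓ (‖gradient F w‖ + C)),
      ∀ w₂ ∈ Metric.ball w (C / ℓ (‖gradient F w‖ + C)),
        ‖gradient F w₁ - gradient F w₂‖ ≤ ℓ (‖gradient F w‖ + C) * ‖w₁ - w₂‖)
    (Fstar : ℝ) (hbdd : ∀ w, Fstar ≤ F w) :
    ∀ w : EuclideanSpace ℝ (Fin d),
      ‖gradient F w‖ ^ 2 ≤ 2 * ℓ (2 * ‖gradient F w‖) * (F w - Fstar) := by
  intro w
  set g := gradient F w
  have hgap : 0 ≤ F w - Fstar := sub_nonneg.2 (hbdd w)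
  obtain hg | hg := (norm_nonneg g).eq_or_lt
  · rw [← hg, mul_zero, zero_pow two_ne_zero]
    exact mul_nonneg (mul_nonneg zero_le_two (hℓ_pos 0 le_rfl).le) hgap
  set L := ℓ (2 * ‖g‖)
  have hL : 0 < L := hℓ_pos _ (by positivity)
  have hlip : ∀ y ∈ Metric.ball w (‖g‖ / L), ‖gradient F y - g‖ ≤ L * ‖y - w‖ := by
    have := hsmooth w ‖g‖ hg
    rw [← two_mul] at this
    exact fun y hy => this y hy w (Metric.mem_ball_self (by positivity))
  have hnorm : ‖-L⁻¹ • g‖ = ‖g‖ / L := by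
    rw [norm_smul, norm_neg, norm_inv, Real.norm_of_nonneg hL.le, inv_mul_eq_div]
  have hstep : F (w + -L⁻¹ • g) ≤ F w + ⟪g, -L⁻¹ • g⟫ + L / 2 * ‖-L⁻¹ • g‖ ^ 2 :=
    le_add_inner_gradient_add_of_lipschitz_on_ball hdiff (by positivity) hlip hnorm.le
  have hval : F w + ⟪g, -L⁻¹ • g⟫ + L / 2 * ‖-L⁻¹ • g‖ ^ 2 = F w - ‖g‖ ^ 2 / (2 * L) := by
    rw [hnorm, inner_smul_right, real_inner_self_eq_norm_sq]
    field_simp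
    ring
  calc ‖g‖ ^ 2 = 2 * L * (‖g‖ ^ 2 / (2 * L)) := by field_simp
    _ ≤ 2 * L * (F w - Fstar) := by
      gcongr
      linarith [hbdd (w + -L⁻¹ • g)]

theorem stmt_9 (d : ℕ) (F : EuclideanSpace ℝ (Fin d) → ℝ) (ℓ : ℝ → ℝ)
    (hℓ_mono : Monotone ℓ) (hℓ_cont : Continuous ℓ) (hℓ_pos : ∀ u, 0 ≤ u → 0 < ℓ u)
    (hdiff : Differentiable ℝ F)
    (hsmooth : ∀ w : EuclideanSpace ℝ (Fin d), ∀ C : ℝ, 0 < C →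
      ∀ w₁ ∈ Metric.ball w (C / ℓ (‖gradient F w‖ + C)),
      ∀ w₂ ∈ Metric.ball w (C / ℓ (‖gradient F w‖ + C)),
        ‖gradient F w₁ - gradient F w₂‖ ≤ ℓ (‖gradient F w‖ + C) * ‖w₁ - w₂‖)
    (Fstar : ℝ) (hbdd : ∀ w, Fstar ≤ F w) :
    ∀ w : EuclideanSpace ℝ (Fin d),
      ‖gradient F w‖ ^ 2 ≤ 2 * ℓ (2 * ‖gradient F w‖) * (F w - Fstar) :=
  stmt_9_general d F ℓ hℓ_pos hdiff hsmooth Fstar hbdd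
end

section
/- Let x_1, ..., x_n ∈ R^d with Σ_{i=1}^n x_i = 0 (gradients at the optimum sum to zero), let σ*² = (1/n)Σ_i ‖x_i‖², and let π be a uniformly random permutation of [n] with n ≥ 2. Then E[Σ_{i=1}^{n-1} ‖Σ_{j=i}^{n-1} x_{π(j+1)}‖²] = n(n+1)σ*²/6. -/
/-!
Exchange the two sums. For fixed `i` the inner vector is the sum of `x` over the image of a
uniformly random permutation on a fixed set of `n - i` indices. By exchangeability,
`E ⟪x (π j), x (π j')⟫` is `σ*²` for `j = j'`, and for `j ≠ j'` it is `-σ*² / (n - 1)` because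
`∑ x = 0`; hence `E ‖∑_{j ∈ S} x (π j)‖² = #S (n - #S) σ*² / (n - 1)`, and it remains to
evaluate `∑_{i=1}^{n-1} (n - i) i = (n - 1) n (n + 1) / 6`.
-/

open Finset Equiv RealInnerProductSpace
open scoped Nat

section Permutations

variable {α M : Type*} [Fintype α] [DecidableEq α] [AddCommMonoid M]

/-- Each point is sent to each value by exactly `(card α - 1)!` permutations. -/
theorem card_smul_sum_perm_apply (f : α → M) (j : α) :
    Fintype.card α • ∑ σ : Perm α, f (σ j) = (Fintype.card α)! • ∑ a, f a := by
  have hconst (j' : α) : ∑ σ : Perm α, f (σ j') = ∑ σ : Perm α, f (σ j) := by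
    simpa [Perm.mul_apply] using
      Equiv.sum_comp (Equiv.mulRight (swap j j')) fun σ : Perm α => f (σ j)
  calc Fintype.card α • ∑ σ : Perm α, f (σ j)
      = ∑ j', ∑ σ : Perm α, f (σ j') := by simp [hconst]
    _ = ∑ σ : Perm α, ∑ j', f (σ j') := sum_comm
    _ = (Fintype.card α)! • ∑ a, f a := by
      simp [Equiv.sum_comp, Fintype.card_perm]

theorem sum_perm_apply_apply_eq (g : α → α → M) {j j' j'' : α} (h' : j' ≠ j) (h'' : j'' ≠ j) :
    ∑ σ : Perm α, g (σ j) (σ j') = ∑ σ : Perm α, g (σ j) (σ j'') := by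
  have hj : swap j' j'' j = j := swap_apply_of_ne_of_ne h'.symm h''.symm
  simpa [Perm.mul_apply, hj] using Eq.symm <|
    Equiv.sum_comp (Equiv.mulRight (swap j' j'')) fun σ : Perm α => g (σ j) (σ j')

end Permutations

section Covariance

variable {α E : Type*} [Fintype α] [DecidableEq α]
  [NormedAddCommGroup E] {y : α → E}

theorem card_mul_sum_perm_norm_sq_apply (j : α) :
    (Fintype.card α : ℝ) * ∑ σ : Perm α, ‖y (σ j)‖ ^ 2
      = (Fintype.card α)! * ∑ a, ‖y a‖ ^ 2 := by
  simpa only [nsmul_eq_mul] using card_smul_sum_perm_apply (fun a => ‖y a‖ ^ 2) j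

variable [InnerProductSpace ℝ E]

theorem card_mul_sum_perm_inner_of_ne (hy : ∑ a, y a = 0) {j j' : α} (hj : j' ≠ j) :
    (Fintype.card α : ℝ) * (Fintype.card α - 1) * ∑ σ : Perm α, ⟪y (σ j), y (σ j')⟫
      = -((Fintype.card α)! * ∑ a, ‖y a‖ ^ 2) := by
  have hcard : ((#(univ.erase j) : ℕ) : ℝ) = Fintype.card α - 1 := by
    rw [card_erase_of_mem (mem_univ j), card_univ, Nat.cast_pred (Fintype.card_pos_iff.2 ⟨j⟩)]
  have hrow : ∑ j'' ∈ univ.erase j, ∑ σ : Perm α, ⟪y (σ j), y (σ j'')⟫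
      = (Fintype.card α - 1) * ∑ σ : Perm α, ⟪y (σ j), y (σ j')⟫ := by
    rw [sum_congr rfl fun j'' hj'' => (sum_perm_apply_apply_eq (fun a b => ⟪y a, y b⟫) hj
      (ne_of_mem_erase hj'')).symm, sum_const, nsmul_eq_mul, hcard]
  -- the other summands of `∑ a, y a = 0` add up to `-y (σ j)`
  have hneg : ∑ j'' ∈ univ.erase j, ∑ σ : Perm α, ⟪y (σ j), y (σ j'')⟫
      = -∑ σ : Perm α, ‖y (σ j)‖ ^ 2 := by
    rw [sum_comm, ← sum_neg_distrib]
    refine sum_congr rfl fun σ _ => ?_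
    rw [← inner_sum, sum_erase_eq_sub (mem_univ j), Equiv.sum_comp σ y, hy, zero_sub,
      inner_neg_right, real_inner_self_eq_norm_sq]
  rw [mul_assoc, ← hrow, hneg, mul_neg, card_mul_sum_perm_norm_sq_apply]

theorem card_mul_sum_perm_inner (hy : ∑ a, y a = 0) (j j' : α) :
    (Fintype.card α : ℝ) * (Fintype.card α - 1) * ∑ σ : Perm α, ⟪y (σ j), y (σ j')⟫
      = ((if j' = j then (Fintype.card α : ℝ) else 0) - 1)
          * ((Fintype.card α)! * ∑ a, ‖y a‖ ^ 2) := by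
  obtain rfl | hj := eq_or_ne j' j
  · rw [if_pos rfl]
    simp_rw [real_inner_self_eq_norm_sq]
    rw [mul_right_comm, card_mul_sum_perm_norm_sq_apply, mul_comm]
  · rw [card_mul_sum_perm_inner_of_ne hy hj, if_neg hj, zero_sub, neg_one_mul]

theorem card_mul_sum_perm_norm_sq_sum (hy : ∑ a, y a = 0) (S : Finset α) :
    (Fintype.card α : ℝ) * (Fintype.card α - 1) * ∑ σ : Perm α, ‖∑ j ∈ S, y (σ j)‖ ^ 2
      = (Fintype.card α)! * (#S * (Fintype.card α - #S)) * ∑ a, ‖y a‖ ^ 2 := by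
  set C := ((Fintype.card α)! : ℝ) * ∑ a, ‖y a‖ ^ 2
  calc (Fintype.card α : ℝ) * (Fintype.card α - 1) * ∑ σ : Perm α, ‖∑ j ∈ S, y (σ j)‖ ^ 2
      = ∑ j ∈ S, ∑ j' ∈ S,
          (Fintype.card α : ℝ) * (Fintype.card α - 1) * ∑ σ : Perm α, ⟪y (σ j), y (σ j')⟫ := by
        simp_rw [← real_inner_self_eq_norm_sq, sum_inner, inner_sum, mul_sum]
        rw [sum_comm]
        exact sum_congr rfl fun _ _ => sum_comm
    _ = ∑ j ∈ S, ∑ j' ∈ S, ((if j' = j then (Fintype.card α : ℝ) else 0) - 1) * C := by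
        simp only [card_mul_sum_perm_inner hy, C]
    _ = ∑ j ∈ S, (Fintype.card α - #S) * C := by
        refine sum_congr rfl fun j hj => ?_
        rw [← sum_mul, sum_sub_distrib, sum_ite_eq', if_pos hj, sum_const, nsmul_one]
    _ = (Fintype.card α)! * (#S * (Fintype.card α - #S)) * ∑ a, ‖y a‖ ^ 2 := by
        rw [sum_const, nsmul_eq_mul]; ring

end Covariance

theorem Fin.card_filter_le_val (n i : ℕ) : #{j : Fin n | i ≤ (j : ℕ)} = n - i := by
  rw [← Nat.card_Ico i n]
  exact card_bij (fun j _ => (j : ℕ)) (by simp) (fun _ _ _ _ h => Fin.val_injective h)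
    fun a ha => ⟨⟨a, (mem_Ico.1 ha).2⟩, by simpa using (mem_Ico.1 ha).1, rfl⟩

theorem sum_Ico_one_sub_mul_self (c : ℝ) (m : ℕ) :
    ∑ i ∈ Ico 1 m, (c - i) * i = m * (m - 1) * (3 * c - 2 * m + 1) / 6 := by
  induction m with
  | zero => simp
  | succ m ih =>
    obtain rfl | hm := m.eq_zero_or_pos
    · simp
    rw [sum_Ico_succ_top hm, ih]
    push_cast
    ring

theorem stmt_15 (d n : ℕ) (hn : 2 ≤ n) (x : Fin n → EuclideanSpace ℝ (Fin d))
    (hsum : ∑ i, x i = 0) (σstar : ℝ)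
    (hσ : σstar ^ 2 = (1 / (n : ℝ)) * ∑ i, ‖x i‖ ^ 2) :
    ((Fintype.card (Equiv.Perm (Fin n)) : ℝ))⁻¹ *
      ∑ π : Equiv.Perm (Fin n),
        ∑ i ∈ Finset.Ico 1 n,
          ‖∑ j ∈ Finset.univ.filter (fun j : Fin n => i ≤ (j : ℕ)), x (π j)‖ ^ 2
    = (n : ℝ) * ((n : ℝ) + 1) * σstar ^ 2 / 6 := by
  have hn' : (2 : ℝ) ≤ n := by exact_mod_cast hn
  have hterm (i : ℕ) (hi : i ∈ Ico 1 n) :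
      (n : ℝ) * (n - 1) * ∑ π : Perm (Fin n),
          ‖∑ j ∈ univ.filter (fun j : Fin n => i ≤ (j : ℕ)), x (π j)‖ ^ 2
        = n ! * ((n - i) * i) * ∑ a, ‖x a‖ ^ 2 := by
    have := card_mul_sum_perm_norm_sq_sum hsum (univ.filter fun j : Fin n => i ≤ (j : ℕ))
    rw [Fin.card_filter_le_val, Fintype.card_fin, Nat.cast_sub (mem_Ico.1 hi).2.le] at this
    rw [this]
    ring
  have htotal : ∑ i ∈ Ico 1 n, ∑ π : Perm (Fin n),
      ‖∑ j ∈ univ.filter (fun j : Fin n => i ≤ (j : ℕ)), x (π j)‖ ^ 2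
        = n ! * ((n + 1) / 6) * ∑ a, ‖x a‖ ^ 2 := by
    refine mul_left_cancel₀ (by nlinarith : (n : ℝ) * (n - 1) ≠ 0) ?_
    rw [mul_sum, sum_congr rfl hterm, ← sum_mul, ← mul_sum, sum_Ico_one_sub_mul_self]
    ring
  rw [Fintype.card_perm, Fintype.card_fin, sum_comm, htotal, hσ]
  field_simp
end

section
/- Let f(·;i) be L-Lipschitz-smooth along the trajectory and satisfy the variance condition (1/n)Σ_i‖∇f(w;i) − ∇F(w)‖² ≤ A‖∇F(w)‖² + σ². Let w_0, ..., w_{n} be inner iterates with w_k − w_0 = −(η/n)Σ_{j=0}^{k-1}∇f(w_j; π_{j+1}) for an arbitrary fixed permutation π. If 0 < η ≤ 1/(√3·L), then Σ_{j=0}^{n-1} ‖w_j − w_0‖² ≤ n·η²·[(3A+2)‖∇F(w_0)‖² + 3σ²]. -/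
/-!
Each iterate differs from `w₀` by `η/n` times a partial sum of `k` gradients. Splitting every
gradient `∇f(w_j; π_j)` into the smoothness error `∇f(w_j; π_j) - ∇f(w₀; π_j)`, the deviation
`∇f(w₀; π_j) - ∇F(w₀)` and `∇F(w₀)`, and applying `‖∑_{j<k} v_j‖² ≤ k ∑_{j<k} ‖v_j‖²` to each part,
bounds `‖w_k - w₀‖²` by the displacements of earlier iterates, the variance and `k² ‖∇F(w₀)‖²`.
Summing over `k < n` gives `S ≤ (3/2) η² L² S + ⋯` for `S = ∑_j ‖w_j - w₀‖²`, and the step-size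
condition `3 η² L² ≤ 1` lets the right-hand side absorb half of `S`.
-/

open Finset

section NormSq

variable {E : Type*} [NormedAddCommGroup E]

lemma norm_sum_sq_le_card_mul_sum_sq {ι : Type*} (s : Finset ι) (v : ι → E) :
    ‖∑ j ∈ s, v j‖ ^ 2 ≤ #s * ∑ j ∈ s, ‖v j‖ ^ 2 :=
  calc ‖∑ j ∈ s, v j‖ ^ 2 ≤ (∑ j ∈ s, ‖v j‖) ^ 2 :=
        pow_le_pow_left₀ (norm_nonneg _) (norm_sum_le _ _) 2
    _ ≤ #s * ∑ j ∈ s, ‖v j‖ ^ 2 := sq_sum_le_card_mul_sum_sq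

lemma norm_add₃_sq_le (x y z : E) : ‖x + y + z‖ ^ 2 ≤ 3 * (‖x‖ ^ 2 + ‖y‖ ^ 2 + ‖z‖ ^ 2) := by
  simpa [Fin.sum_univ_three, add_assoc] using norm_sum_sq_le_card_mul_sum_sq univ ![x, y, z]

end NormSq

lemma Fin.sum_filter_val_lt {M : Type*} [AddCommMonoid M] (n k : ℕ) (v : ℕ → M) :
    ∑ j ∈ univ.filter (fun j : Fin n => (j : ℕ) < k), v j = ∑ j ∈ range (min n k), v j := by
  rw [sum_filter, Fin.sum_univ_eq_sum_range (fun j => if j < k then v j else 0) n,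
    ← sum_filter]
  congr 1
  ext j
  simp only [mem_filter, mem_range]
  omega

lemma sum_range_natCast_le (n : ℕ) : ∑ k ∈ range n, (k : ℝ) ≤ (n : ℝ) ^ 2 / 2 := by
  induction n with
  | zero => simp
  | succ m ih =>
    rw [sum_range_succ]
    push_cast
    nlinarith

lemma sum_range_natCast_sq_le (n : ℕ) : ∑ k ∈ range n, (k : ℝ) ^ 2 ≤ (n : ℝ) ^ 3 / 3 := by
  induction n with
  | zero => simp
  | succ m ih =>
    rw [sum_range_succ]
    push_cast
    nlinarith [(m.cast_nonneg : (0 : ℝ) ≤ m)]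

section Shuffling

variable {E : Type*} [NormedAddCommGroup E] [NormedSpace ℝ E] {n : ℕ} {g h : Fin n → E}
  {w : ℕ → E} {G : E} {L V η : ℝ}

lemma norm_iterate_sub_sq_le (hLip : ∀ j : Fin n, ‖g j - h j‖ ≤ L * ‖w j - w 0‖)
    (hvar : ∑ j, ‖h j - G‖ ^ 2 ≤ n * V) {k : ℕ} (hk : k ≤ n)
    (hiter : w k - w 0 = -((η / n) • ∑ j ∈ univ.filter (fun j : Fin n => (j : ℕ) < k), g j)) :
    ‖w k - w 0‖ ^ 2 ≤ 3 * (η / n) ^ 2 *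
      (k * (L ^ 2 * ∑ j ∈ range k, ‖w j - w 0‖ ^ 2 + n * V) + (k : ℝ) ^ 2 * ‖G‖ ^ 2) := by
  set s := univ.filter (fun j : Fin n => (j : ℕ) < k)
  have hs : (#s : ℝ) = k := by
    rw [Fin.card_filter_val_lt, min_eq_right hk]
  have hsplit : ∑ j ∈ s, g j = ∑ j ∈ s, (g j - h j) + ∑ j ∈ s, (h j - G) + (k : ℝ) • G := by
    have hconst : (k : ℝ) • G = ∑ _j ∈ s, G := by
      rw [sum_const, ← Nat.cast_smul_eq_nsmul ℝ, hs]
    rw [hconst, ← sum_add_distrib, ← sum_add_distrib]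
    exact sum_congr rfl fun _ _ => by abel
  have hsmooth : ‖∑ j ∈ s, (g j - h j)‖ ^ 2 ≤ k * (L ^ 2 * ∑ j ∈ range k, ‖w j - w 0‖ ^ 2) := by
    refine (norm_sum_sq_le_card_mul_sum_sq s _).trans ?_
    have hrange : ∑ j ∈ s, ‖w j - w 0‖ ^ 2 = ∑ j ∈ range k, ‖w j - w 0‖ ^ 2 := by
      rw [← min_eq_right hk]
      exact Fin.sum_filter_val_lt n k fun j => ‖w j - w 0‖ ^ 2
    rw [hs, ← hrange, mul_sum s (fun j : Fin n => ‖w j - w 0‖ ^ 2)]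
    gcongr with j
    rw [← mul_pow]
    exact pow_le_pow_left₀ (norm_nonneg _) (hLip j) 2
  have hdev : ‖∑ j ∈ s, (h j - G)‖ ^ 2 ≤ k * (n * V) := by
    refine (norm_sum_sq_le_card_mul_sum_sq s _).trans ?_
    rw [hs]
    gcongr
    exact (sum_le_univ_sum_of_nonneg fun _ => by positivity).trans hvar
  have hmean : ‖(k : ℝ) • G‖ ^ 2 = (k : ℝ) ^ 2 * ‖G‖ ^ 2 := by
    rw [norm_smul, mul_pow, Real.norm_natCast]
  calc ‖w k - w 0‖ ^ 2 = (η / n) ^ 2 * ‖∑ j ∈ s, g j‖ ^ 2 := by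
        rw [hiter, norm_neg, norm_smul, mul_pow, Real.norm_eq_abs, sq_abs]
    _ ≤ (η / n) ^ 2 * (3 * (k * (L ^ 2 * ∑ j ∈ range k, ‖w j - w 0‖ ^ 2) + k * (n * V)
          + (k : ℝ) ^ 2 * ‖G‖ ^ 2)) := by
        gcongr
        rw [hsplit, ← hmean]
        refine (norm_add₃_sq_le _ _ _).trans ?_
        gcongr
    _ = _ := by ring

lemma sum_norm_iterate_sub_sq_le (hn : 0 < n) (hstep : 3 * η ^ 2 * L ^ 2 ≤ 1)
    (hLip : ∀ j : Fin n, ‖g j - h j‖ ≤ L * ‖w j - w 0‖) (hvar : ∑ j, ‖h j - G‖ ^ 2 ≤ n * V)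
    (hiter : ∀ k ≤ n,
      w k - w 0 = -((η / n) • ∑ j ∈ univ.filter (fun j : Fin n => (j : ℕ) < k), g j)) :
    ∑ k ∈ range n, ‖w k - w 0‖ ^ 2 ≤ n * η ^ 2 * (3 * V + 2 * ‖G‖ ^ 2) := by
  set S := ∑ k ∈ range n, ‖w k - w 0‖ ^ 2
  set B := L ^ 2 * S + n * V
  have hS : 0 ≤ S := sum_nonneg fun _ _ => by positivity
  have hB : 0 ≤ B := add_nonneg (by positivity) ((sum_nonneg fun _ _ => by positivity).trans hvar)
  have hpoint : ∀ k ∈ range n,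
      ‖w k - w 0‖ ^ 2 ≤ 3 * (η / n) ^ 2 * (k * B + (k : ℝ) ^ 2 * ‖G‖ ^ 2) := by
    intro k hk
    have hk : k ≤ n := (mem_range.1 hk).le
    refine (norm_iterate_sub_sq_le hLip hvar hk (hiter k hk)).trans ?_
    show _ ≤ 3 * (η / n) ^ 2 * (k * (L ^ 2 * S + n * V) + (k : ℝ) ^ 2 * ‖G‖ ^ 2)
    gcongr
    exact sum_le_sum_of_subset_of_nonneg (range_subset_range.2 hk) fun _ _ _ => by positivity
  have hn' : (n : ℝ) ≠ 0 := by positivity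
  have hsum : S ≤ 3 / 2 * η ^ 2 * (L ^ 2 * S) + n * η ^ 2 * (3 / 2 * V + ‖G‖ ^ 2) :=
    calc S ≤ ∑ k ∈ range n, 3 * (η / n) ^ 2 * (k * B + (k : ℝ) ^ 2 * ‖G‖ ^ 2) := sum_le_sum hpoint
      _ = 3 * (η / n) ^ 2 * ((∑ k ∈ range n, (k : ℝ)) * B
            + (∑ k ∈ range n, (k : ℝ) ^ 2) * ‖G‖ ^ 2) := by
        rw [← mul_sum, sum_add_distrib, sum_mul, sum_mul]
      _ ≤ 3 * (η / n) ^ 2 * ((n : ℝ) ^ 2 / 2 * B + (n : ℝ) ^ 3 / 3 * ‖G‖ ^ 2) := by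
        gcongr
        · exact sum_range_natCast_le n
        · exact sum_range_natCast_sq_le n
      _ = _ := by field_simp; ring
  linarith [mul_le_mul_of_nonneg_right hstep hS]

end Shuffling

theorem stmt_19_general (d n : ℕ) (hn : 1 ≤ n)
    (f : Fin n → EuclideanSpace ℝ (Fin d) → ℝ) (π : Equiv.Perm (Fin n))
    (w : ℕ → EuclideanSpace ℝ (Fin d)) (L A σ η : ℝ)
    (F : EuclideanSpace ℝ (Fin d) → ℝ)
    (hL : 0 < L) (hη : 0 < η)
    (hηL : η ≤ 1 / (Real.sqrt 3 * L))
    (hLip : ∀ i : Fin n, ∀ j ≤ n,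
      ‖gradient (f i) (w j) - gradient (f i) (w 0)‖ ≤ L * ‖w j - w 0‖)
    (hvar : (1 / (n : ℝ)) * ∑ i, ‖gradient (f i) (w 0) - gradient F (w 0)‖ ^ 2
      ≤ A * ‖gradient F (w 0)‖ ^ 2 + σ ^ 2)
    (hiter : ∀ k ≤ n, w k - w 0 = -((η / (n : ℝ)) •
      ∑ j ∈ Finset.univ.filter (fun j : Fin n => (j : ℕ) < k),
        gradient (f (π j)) (w (j : ℕ)))) :
    ∑ j ∈ Finset.range n, ‖w j - w 0‖ ^ 2
      ≤ (n : ℝ) * η ^ 2 * ((3 * A + 2) * ‖gradient F (w 0)‖ ^ 2 + 3 * σ ^ 2) := by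
  have hn' : (0 : ℝ) < n := by exact_mod_cast hn
  have hstep : 3 * η ^ 2 * L ^ 2 ≤ 1 := by
    have h : η * (Real.sqrt 3 * L) ≤ 1 := (le_div_iff₀ (by positivity)).1 hηL
    calc 3 * η ^ 2 * L ^ 2 = (η * (Real.sqrt 3 * L)) ^ 2 := by
          rw [mul_pow, mul_pow, Real.sq_sqrt zero_le_three]; ring
      _ ≤ 1 := pow_le_one₀ (by positivity) h
  have hvar' : ∑ j, ‖gradient (f (π j)) (w 0) - gradient F (w 0)‖ ^ 2
      ≤ n * (A * ‖gradient F (w 0)‖ ^ 2 + σ ^ 2) := by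
    rw [Equiv.sum_comp π (fun i => ‖gradient (f i) (w 0) - gradient F (w 0)‖ ^ 2)]
    rwa [one_div_mul_eq_div, div_le_iff₀' hn'] at hvar
  calc _ ≤ n * η ^ 2 * (3 * (A * ‖gradient F (w 0)‖ ^ 2 + σ ^ 2) + 2 * ‖gradient F (w 0)‖ ^ 2) :=
        sum_norm_iterate_sub_sq_le hn hstep (fun j => hLip (π j) j j.is_lt.le) hvar' hiter
    _ = _ := by ring

theorem stmt_19 (d n : ℕ) (hn : 1 ≤ n)
    (f : Fin n → EuclideanSpace ℝ (Fin d) → ℝ) (π : Equiv.Perm (Fin n))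
    (w : ℕ → EuclideanSpace ℝ (Fin d)) (L A σ η : ℝ)
    (F : EuclideanSpace ℝ (Fin d) → ℝ)
    (hF : F = fun v => (1 / (n : ℝ)) * ∑ i, f i v)
    (hL : 0 < L) (hA : 0 < A) (hσ : 0 < σ) (hη : 0 < η)
    (hηL : η ≤ 1 / (Real.sqrt 3 * L))
    (hLip : ∀ i : Fin n, ∀ j ≤ n,
      ‖gradient (f i) (w j) - gradient (f i) (w 0)‖ ≤ L * ‖w j - w 0‖)
    (hvar : (1 / (n : ℝ)) * ∑ i, ‖gradient (f i) (w 0) - gradient F (w 0)‖ ^ 2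
      ≤ A * ‖gradient F (w 0)‖ ^ 2 + σ ^ 2)
    (hiter : ∀ k ≤ n, w k - w 0 = -((η / (n : ℝ)) •
      ∑ j ∈ Finset.univ.filter (fun j : Fin n => (j : ℕ) < k),
        gradient (f (π j)) (w (j : ℕ)))) :
    ∑ j ∈ Finset.range n, ‖w j - w 0‖ ^ 2
      ≤ (n : ℝ) * η ^ 2 * ((3 * A + 2) * ‖gradient F (w 0)‖ ^ 2 + 3 * σ ^ 2) :=
  stmt_19_general d n hn f π w L A σ η F hL hη hηL hLip hvar hiter
end
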